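/- Let (V,w) be a weighted graph, let Ŝ ⊆ V, and let 0 ≤ ε < 1. (i) Let U ⊆ V∖Ŝ be nonempty and let r be an integer with 0 ≤ r ≤ |U| and r/|U| ≤ ε; if R is a uniformly random r-element subset of U, then E[δ_w(Ŝ ∪ R)] ≥ (1 − ε)·δ_w(Ŝ). (ii) Let r be an integer with 0 ≤ r ≤ |Ŝ|, Ŝ ≠ ∅, and r/|Ŝ| ≤ ε; if R is a uniformly random r-element subset of Ŝ, then E[δ_w(Ŝ ∖ R)] ≥ (1 − ε)·δ_w(Ŝ). (Random correction step, Lemma 3.1.) -/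

import Mathlib

/-!
Adding a set `R` disjoint from `Ŝ` loses at most the weight between `Ŝ` and `R`, and deleting
`R ⊆ Ŝ` loses at most the weight between `R` and `V ∖ Ŝ`. In both cases the loss is
`∑ v ∈ R, f v` for a nonnegative `f` whose total over the ground set `U` is at most `δ(Ŝ)`.
A vertex of `U` lies in a uniformly random `r`-subset with probability `r / |U|`, so the expected
loss is `r / |U| * ∑ v ∈ U, f v ≤ ε δ(Ŝ)`.
-/

open Finset

/-- The cut value of a set `S`: total weight of pairs with exactly one endpoint in `S`. -/
noncomputable def cutVal {V : Type*} [Fintype V] [DecidableEq V]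
    (w : V → V → ℝ) (S : Finset V) : ℝ :=
  ∑ u ∈ S, ∑ v ∈ Sᶜ, w u v

open scoped BigOperators

section PowersetCardAverage

variable {α : Type*} [DecidableEq α]

lemma card_filter_mem_powersetCard_succ {U : Finset α} {v : α} (hv : v ∈ U) (k : ℕ) :
    #{R ∈ U.powersetCard (k + 1) | v ∈ R} = (#U - 1).choose k := by
  simpa using card_filter_powersetCard_subset {v} U (k + 1) (singleton_subset_iff.2 hv) (by simp)

lemma sum_powersetCard_succ_sum {M : Type*} [AddCommMonoid M] (U : Finset α) (k : ℕ)
    (f : α → M) :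
    ∑ R ∈ U.powersetCard (k + 1), ∑ v ∈ R, f v = (#U - 1).choose k • ∑ v ∈ U, f v := by
  rw [sum_comm' (t' := U) (s' := fun v => {R ∈ U.powersetCard (k + 1) | v ∈ R}), smul_sum]
  · exact sum_congr rfl fun v hv => by rw [sum_const, card_filter_mem_powersetCard_succ hv]
  · intro R v
    simp only [mem_powersetCard, mem_filter]
    exact ⟨fun ⟨hR, hv⟩ => ⟨⟨hR, hv⟩, hR.1 hv⟩, fun ⟨hR, _⟩ => hR⟩

lemma expect_powersetCard_sum {K : Type*} [Semifield K] [CharZero K] {U : Finset α} {r : ℕ}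
    (hr : r ≤ #U) (f : α → K) :
    𝔼 R ∈ U.powersetCard r, ∑ v ∈ R, f v = r / #U * ∑ v ∈ U, f v := by
  rcases r with _ | k
  · simp
  -- count the pairs `v ∈ R` both ways
  have hcount : (#U - 1).choose k * #U = #(U.powersetCard (k + 1)) * (k + 1) := by
    have := sum_powersetCard_succ_sum U k fun _ => 1
    simp only [sum_const, smul_eq_mul, mul_one] at this
    rw [← this, ← smul_eq_mul, ← sum_const]
    exact sum_congr rfl fun R hR => by simp [(mem_powersetCard.1 hR).2]
  have hU : (#U : K) ≠ 0 := by norm_cast; omega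
  have hN : (#(U.powersetCard (k + 1)) : K) ≠ 0 := by
    norm_cast; exact (powersetCard_nonempty.2 hr).card_pos.ne'
  rw [expect_eq_sum_div_card, sum_powersetCard_succ_sum, nsmul_eq_mul]
  field_simp
  rw [mul_right_comm, ← Nat.cast_mul, hcount]
  push_cast
  ring

lemma le_expect_powersetCard_of_loss {U : Finset α} {r : ℕ} {ε C : ℝ} (hr : r ≤ #U)
    (hrε : (r : ℝ) / #U ≤ ε) {f : α → ℝ} (hf₀ : 0 ≤ ∑ v ∈ U, f v) (hfC : ∑ v ∈ U, f v ≤ C)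
    {g : Finset α → ℝ} (hg : ∀ R ∈ U.powersetCard r, C - ∑ v ∈ R, f v ≤ g R) :
    (1 - ε) * C ≤ 𝔼 R ∈ U.powersetCard r, g R := by
  have hε : 0 ≤ ε := (by positivity : (0 : ℝ) ≤ r / #U).trans hrε
  have hloss : r / #U * ∑ v ∈ U, f v ≤ ε * C := mul_le_mul hrε hfC hf₀ hε
  calc (1 - ε) * C ≤ C - r / #U * ∑ v ∈ U, f v := by linarith
    _ = 𝔼 R ∈ U.powersetCard r, (C - ∑ v ∈ R, f v) := by
      rw [expect_sub_distrib, expect_const (powersetCard_nonempty.2 hr),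
        expect_powersetCard_sum hr]
    _ ≤ 𝔼 R ∈ U.powersetCard r, g R := expect_le_expect hg

end PowersetCardAverage

section CutValue

variable {V : Type*} [Fintype V] [DecidableEq V] {w : V → V → ℝ}

lemma cutVal_nonneg (hw : ∀ u v, 0 ≤ w u v) (S : Finset V) : 0 ≤ cutVal w S :=
  sum_nonneg fun u _ => sum_nonneg fun v _ => hw u v

lemma sum_sum_le_cutVal_of_disjoint (hw : ∀ u v, 0 ≤ w u v) {S U : Finset V}
    (h : Disjoint U S) : ∑ v ∈ U, ∑ u ∈ S, w u v ≤ cutVal w S := by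
  rw [sum_comm]
  refine sum_le_sum fun u _ => sum_le_sum_of_subset_of_nonneg ?_ fun v _ _ => hw u v
  exact fun v hv => mem_compl.2 (disjoint_left.1 h hv)

lemma cutVal_sub_le_cutVal_union (hw : ∀ u v, 0 ≤ w u v) {S R : Finset V}
    (h : Disjoint R S) : cutVal w S - ∑ v ∈ R, ∑ u ∈ S, w u v ≤ cutVal w (S ∪ R) := by
  have hR : R ⊆ Sᶜ := fun v hv => mem_compl.2 (disjoint_left.1 h hv)
  have hcompl : (S ∪ R)ᶜ = Sᶜ \ R := by ext; simp
  calc cutVal w S - ∑ v ∈ R, ∑ u ∈ S, w u v = ∑ u ∈ S, ∑ v ∈ (S ∪ R)ᶜ, w u v := by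
        rw [cutVal, sum_comm (s := R), ← sum_sub_distrib, hcompl]
        exact sum_congr rfl fun u _ => (sum_sdiff_eq_sub hR).symm
    _ ≤ cutVal w (S ∪ R) :=
      sum_le_sum_of_subset_of_nonneg subset_union_left fun u _ _ =>
        sum_nonneg fun v _ => hw u v

lemma cutVal_sub_le_cutVal_sdiff (hw : ∀ u v, 0 ≤ w u v) {S R : Finset V} (h : R ⊆ S) :
    cutVal w S - ∑ u ∈ R, ∑ v ∈ Sᶜ, w u v ≤ cutVal w (S \ R) := by
  rw [cutVal, ← sum_sdiff_eq_sub h]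
  exact sum_le_sum fun u _ =>
    sum_le_sum_of_subset_of_nonneg (compl_subset_compl.2 sdiff_subset) fun v _ _ => hw u v

end CutValue

theorem random_correction {V : Type*} [Fintype V] [DecidableEq V]
    (w : V → V → ℝ) (hnonneg : ∀ u v, 0 ≤ w u v)
    (Shat : Finset V) (ε : ℝ) :
    (∀ (U : Finset V) (r : ℕ), Disjoint U Shat → U.Nonempty → r ≤ U.card →
        (r : ℝ) / (U.card : ℝ) ≤ ε →
        (1 - ε) * cutVal w Shat ≤
          (∑ R ∈ U.powersetCard r, cutVal w (Shat ∪ R)) / ((U.powersetCard r).card : ℝ)) ∧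
    (∀ r : ℕ, Shat.Nonempty → r ≤ Shat.card → (r : ℝ) / (Shat.card : ℝ) ≤ ε →
        (1 - ε) * cutVal w Shat ≤
          (∑ R ∈ Shat.powersetCard r, cutVal w (Shat \ R)) /
            ((Shat.powersetCard r).card : ℝ)) := by
  refine ⟨fun U r hUS _ hr hrε => ?_, fun r _ hr hrε => ?_⟩
  · rw [← expect_eq_sum_div_card]
    exact le_expect_powersetCard_of_loss hr hrε
      (sum_nonneg fun v _ => sum_nonneg fun u _ => hnonneg u v)
      (sum_sum_le_cutVal_of_disjoint hnonneg hUS) fun R hR =>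
        cutVal_sub_le_cutVal_union hnonneg (disjoint_of_subset_left (mem_powersetCard.1 hR).1 hUS)
  · rw [← expect_eq_sum_div_card]
    exact le_expect_powersetCard_of_loss hr hrε (cutVal_nonneg hnonneg Shat) le_rfl fun R hR =>
      cutVal_sub_le_cutVal_sdiff hnonneg (mem_powersetCard.1 hR).1
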